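/- arXiv:1811.12246 — 3 statements merged into one kernel-verified Lean document; each statement's English description precedes it below -/
import Mathlib

section
/- Let A = K − L = U − V = X − Y be three proper G-weak regular splittings of a group monotone matrix A (A# ≥ 0). Then ρ(X#YU#VK#L) < 1. -/
open Matrix

/-- `X` is the group inverse of `A`. -/
def IsGroupInv {n : ℕ} (A X : Matrix (Fin n) (Fin n) ℝ) : Prop :=
  A * X * A = A ∧ X * A * X = X ∧ A * X = X * A

/-- Spectral radius of a real matrix: sup of moduli of its complex eigenvalues. -/
noncomputable def specRad {n : ℕ} (A : Matrix (Fin n) (Fin n) ℝ) : ℝ :=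
  sSup ((fun z : ℂ => ‖z‖) '' spectrum ℂ (A.map (algebraMap ℝ ℂ)))

/-- `A = U - V` is a proper splitting: `R(U) = R(A)` and `N(U) = N(A)`. -/
def ProperSplitting {n : ℕ} (A U V : Matrix (Fin n) (Fin n) ℝ) : Prop :=
  A = U - V ∧ LinearMap.range U.mulVecLin = LinearMap.range A.mulVecLin ∧
    LinearMap.ker U.mulVecLin = LinearMap.ker A.mulVecLin

/-- Entrywise nonnegativity of a matrix. -/
def Nonneg {n : ℕ} (M : Matrix (Fin n) (Fin n) ℝ) : Prop :=
  ∀ i j, 0 ≤ M i j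

section Aux

variable {n : ℕ}

private lemma nonneg_mul {A B : Matrix (Fin n) (Fin n) ℝ} (hA : Nonneg A) (hB : Nonneg B) :
    Nonneg (A * B) := fun i j => by
  rw [Matrix.mul_apply]
  exact Finset.sum_nonneg fun k _ => mul_nonneg (hA i k) (hB k j)

private lemma matrix_eq_of_mulVec_eq {M N : Matrix (Fin n) (Fin n) ℝ}
    (h : ∀ v, M *ᵥ v = N *ᵥ v) : M = N := by
  ext i j
  have h2 := congrFun (h (Pi.single j 1)) i
  simpa using h2

private lemma proj_eq {A Ai P Pi : Matrix (Fin n) (Fin n) ℝ}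
    (hA : IsGroupInv A Ai) (hP : IsGroupInv P Pi)
    (hr : LinearMap.range P.mulVecLin = LinearMap.range A.mulVecLin)
    (hk : LinearMap.ker P.mulVecLin = LinearMap.ker A.mulVecLin) :
    P * Pi = A * Ai := by
  obtain ⟨hA1, hA2, hA3⟩ := hA
  obtain ⟨hP1, hP2, hP3⟩ := hP
  apply matrix_eq_of_mulVec_eq
  intro v
  have hwr : (A * Ai) *ᵥ v ∈ LinearMap.range P.mulVecLin := by
    rw [hr]
    exact ⟨Ai *ᵥ v, by simp [Matrix.mulVecLin_apply]⟩
  obtain ⟨z, hz⟩ := hwr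
  rw [Matrix.mulVecLin_apply] at hz
  have hAabs : A * (A * Ai) = A := by rw [hA3, ← mul_assoc, hA1]
  have hkerA : A *ᵥ (v - (A * Ai) *ᵥ v) = 0 := by
    rw [Matrix.mulVec_sub, Matrix.mulVec_mulVec, hAabs, sub_self]
  have hkerP : P *ᵥ (v - (A * Ai) *ᵥ v) = 0 := by
    have hmem : v - (A * Ai) *ᵥ v ∈ LinearMap.ker P.mulVecLin := by
      rw [hk]
      simpa [Matrix.mulVecLin_apply] using hkerA
    simpa [Matrix.mulVecLin_apply] using hmem
  have hPi2 : Pi * Pi * P = Pi := by rw [mul_assoc, ← hP3, ← mul_assoc, hP2]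
  have hPiker : Pi *ᵥ (v - (A * Ai) *ᵥ v) = 0 := by
    rw [← hPi2, ← Matrix.mulVec_mulVec, hkerP, Matrix.mulVec_zero]
  have h5 : (P * Pi) *ᵥ ((A * Ai) *ᵥ v) = (A * Ai) *ᵥ v := by
    rw [← hz, Matrix.mulVec_mulVec, hP1]
  have h6 : (P * Pi) *ᵥ (v - (A * Ai) *ᵥ v) = 0 := by
    rw [← Matrix.mulVec_mulVec, hPiker, Matrix.mulVec_zero]
  calc (P * Pi) *ᵥ v
      = (P * Pi) *ᵥ ((A * Ai) *ᵥ v + (v - (A * Ai) *ᵥ v)) := by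
        rw [add_sub_cancel]
    _ = (P * Pi) *ᵥ ((A * Ai) *ᵥ v) + (P * Pi) *ᵥ (v - (A * Ai) *ᵥ v) :=
        Matrix.mulVec_add _ _ _
    _ = (A * Ai) *ᵥ v := by rw [h5, h6, add_zero]

private lemma abs_mulVec_le {R : Matrix (Fin n) (Fin n) ℝ} (hR : Nonneg R) (y : Fin n → ℂ)
    (i : Fin n) :
    ‖(R.map (algebraMap ℝ ℂ) *ᵥ y) i‖ ≤ (R *ᵥ fun j => ‖y j‖) i := by
  simp only [Matrix.mulVec, dotProduct, Matrix.map_apply]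
  refine le_trans (norm_sum_le _ _) (le_of_eq ?_)
  refine Finset.sum_congr rfl fun j _ => ?_
  rw [norm_mul]
  congr 1
  rw [show (algebraMap ℝ ℂ) (R i j) = ((R i j : ℝ) : ℂ) from rfl, Complex.norm_real,
    Real.norm_of_nonneg (hR i j)]

private lemma mulVec_mono {R : Matrix (Fin n) (Fin n) ℝ} (hR : Nonneg R) {a b : Fin n → ℝ}
    (hab : ∀ j, a j ≤ b j) (i : Fin n) : (R *ᵥ a) i ≤ (R *ᵥ b) i := by
  simp only [Matrix.mulVec, dotProduct]
  exact Finset.sum_le_sum fun j _ => mul_le_mul_of_nonneg_left (hab j) (hR i j)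

private lemma mulVec_entry_mono {R S : Matrix (Fin n) (Fin n) ℝ} (hRS : ∀ i j, R i j ≤ S i j)
    {b : Fin n → ℝ} (hb : ∀ j, 0 ≤ b j) (i : Fin n) : (R *ᵥ b) i ≤ (S *ᵥ b) i := by
  simp only [Matrix.mulVec, dotProduct]
  exact Finset.sum_le_sum fun j _ => mul_le_mul_of_nonneg_right (hRS i j) (hb j)

end Aux

theorem three_step_convergence {n : ℕ}
    (A K L U V X Y Ai Ki Ui Xi : Matrix (Fin n) (Fin n) ℝ)
    (hA : IsGroupInv A Ai) (hAi : Nonneg Ai)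
    (hsK : ProperSplitting A K L) (hK : IsGroupInv K Ki)
    (hKi : Nonneg Ki) (hKL : Nonneg (Ki * L))
    (hsU : ProperSplitting A U V) (hU : IsGroupInv U Ui)
    (hUi : Nonneg Ui) (hUV : Nonneg (Ui * V))
    (hsX : ProperSplitting A X Y) (hX : IsGroupInv X Xi)
    (hXi : Nonneg Xi) (hXY : Nonneg (Xi * Y)) :
    specRad (Xi * Y * Ui * V * Ki * L) < 1 := by
  obtain ⟨hKs, hKr, hKk⟩ := hsK
  obtain ⟨hUs, hUr, hUk⟩ := hsU
  obtain ⟨hXs, hXr, hXk⟩ := hsX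
  have hKKi : K * Ki = A * Ai := proj_eq hA hK hKr hKk
  have hUUi : U * Ui = A * Ai := proj_eq hA hU hUr hUk
  have hXXi : X * Xi = A * Ai := proj_eq hA hX hXr hXk
  obtain ⟨hA1, hA2, hA3⟩ := hA
  obtain ⟨hK1, hK2, hK3⟩ := hK
  obtain ⟨hU1, hU2, hU3⟩ := hU
  obtain ⟨hX1, hX2, hX3⟩ := hX
  have hKiK : Ki * K = A * Ai := by rw [← hK3]; exact hKKi
  have hUiU : Ui * U = A * Ai := by rw [← hU3]; exact hUUi
  have hXiX : Xi * X = A * Ai := by rw [← hX3]; exact hXXi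
  -- absorption identities
  have hAE : A * (A * Ai) = A := by rw [hA3, ← mul_assoc, hA1]
  have hEAi : A * Ai * Ai = Ai := by rw [hA3]; exact hA2
  have hKiE : Ki * (A * Ai) = Ki := by rw [← hKKi, ← mul_assoc]; exact hK2
  have hUiE : Ui * (A * Ai) = Ui := by rw [← hUUi, ← mul_assoc]; exact hU2
  have hXiE : Xi * (A * Ai) = Xi := by rw [← hXXi, ← mul_assoc]; exact hX2
  have hEXi : A * Ai * Xi = Xi := by rw [← hXiX]; exact hX2
  have hUE : U * (A * Ai) = U := by rw [← hUiU, ← mul_assoc]; exact hU1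
  have hVeq : U - A = V := by rw [hUs, sub_sub_cancel]
  have hYeq : X - A = Y := by rw [hXs, sub_sub_cancel]
  have hLeq : K - A = L := by rw [hKs, sub_sub_cancel]
  have hVE : V * (A * Ai) = V := by rw [← hVeq, sub_mul, hUE, hAE]
  have hXE : X * (A * Ai) = X := by rw [← hXiX, ← mul_assoc]; exact hX1
  have hYE : Y * (A * Ai) = Y := by rw [← hYeq, sub_mul, hXE, hAE]
  have hVA : V + A = U := by rw [hUs]; abel
  have hYA : Y + A = X := by rw [hXs]; abel
  set T := Xi * Y * Ui * V * Ki * L with hT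
  set B3 := Xi * Y with hB3
  set G2 := B3 * Ui with hG2
  set D := G2 * V with hD
  set C := Xi + G2 + D * Ki with hC
  -- nonnegativity
  have nnG2 : Nonneg G2 := by rw [hG2]; exact nonneg_mul hXY hUi
  have nnD : Nonneg D := by
    have h : D = B3 * (Ui * V) := by rw [hD, hG2, mul_assoc]
    rw [h]; exact nonneg_mul hXY hUV
  have nnDKi : Nonneg (D * Ki) := nonneg_mul nnD hKi
  have nnT : Nonneg T := by
    have h : T = D * (Ki * L) := by rw [hT, mul_assoc]
    rw [h]; exact nonneg_mul nnD hKL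
  have nnTpow : ∀ k : ℕ, Nonneg (T ^ k) := by
    intro k; induction k with
    | zero =>
      intro i j
      rw [pow_zero]
      by_cases h : i = j <;> simp [Matrix.one_apply, h]
    | succ k ih => rw [pow_succ]; exact nonneg_mul ih nnT
  have nnC : Nonneg C := by
    intro i j
    simp only [hC, Matrix.add_apply]
    have := add_nonneg (add_nonneg (hXi i j) (nnG2 i j)) (nnDKi i j)
    exact this
  -- key identities
  have hKiL : Ki * L = A * Ai - Ki * A := by rw [← hLeq, mul_sub, hKiK]
  have hDE : D * (A * Ai) = D := by rw [hD, mul_assoc, hVE]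
  have hB3E : B3 * (A * Ai) = B3 := by rw [hB3, mul_assoc, hYE]
  have key1 : T + C * A = A * Ai := by
    have e1 : T = D - D * (Ki * A) := by
      rw [hT, mul_assoc, hKiL, mul_sub, hDE]
    have e2 : C * A = Xi * A + G2 * A + D * (Ki * A) := by
      rw [hC, add_mul, add_mul, mul_assoc D Ki A]
    rw [e1, e2]
    have e3 : D + G2 * A = B3 := by
      rw [hD, ← mul_add, hVA, hG2, mul_assoc, hUiU, hB3E]
    calc D - D * (Ki * A) + (Xi * A + G2 * A + D * (Ki * A))
        = D + G2 * A + Xi * A := by abel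
      _ = B3 + Xi * A := by rw [e3]
      _ = A * Ai := by rw [hB3, ← mul_add, hYA, hXiX]
  have g2e : G2 * (A * Ai) = G2 := by rw [hG2, mul_assoc, hUiE]
  have dke : D * Ki * (A * Ai) = D * Ki := by rw [mul_assoc, hKiE]
  have hCE : C * (A * Ai) = C := by rw [hC, add_mul, add_mul, hXiE, g2e, dke]
  have key2 : T * Ai + C = Ai := by
    have h : (T + C * A) * Ai = A * Ai * Ai := by rw [key1]
    rw [add_mul, mul_assoc C A Ai, hCE, hEAi] at h
    exact h
  have hTAi : T * Ai = Ai - C := eq_sub_of_add_eq key2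
  have keyInd : ∀ m : ℕ, (∑ k ∈ Finset.range m, T ^ (k + 1)) * C + T ^ (m + 1) * Ai + C = Ai := by
    intro m
    induction m with
    | zero => simpa [pow_one] using key2
    | succ m ih =>
      rw [Finset.sum_range_succ, add_mul, pow_succ T (m + 1), mul_assoc, hTAi, mul_sub]
      calc (∑ k ∈ Finset.range m, T ^ (k + 1)) * C + T ^ (m + 1) * C +
            (T ^ (m + 1) * Ai - T ^ (m + 1) * C) + C
          = (∑ k ∈ Finset.range m, T ^ (k + 1)) * C + T ^ (m + 1) * Ai + C := by abel
        _ = Ai := ih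
  have keyBound : ∀ (m : ℕ) i j, ((∑ k ∈ Finset.range m, T ^ (k + 1)) * Xi) i j ≤ Ai i j := by
    intro m i j
    have nnS : Nonneg (∑ k ∈ Finset.range m, T ^ (k + 1)) := by
      intro a b
      rw [Matrix.sum_apply]
      exact Finset.sum_nonneg fun k _ => nnTpow (k + 1) a b
    have h1 : ((∑ k ∈ Finset.range m, T ^ (k + 1)) * Xi) i j
        ≤ ((∑ k ∈ Finset.range m, T ^ (k + 1)) * C) i j := by
      have hsub : Nonneg ((∑ k ∈ Finset.range m, T ^ (k + 1)) * (C - Xi)) := by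
        apply nonneg_mul nnS
        intro a b
        have hCXi : C - Xi = G2 + D * Ki := by rw [hC]; abel
        rw [hCXi, Matrix.add_apply]
        exact add_nonneg (nnG2 a b) (nnDKi a b)
      have h2 := hsub i j
      rw [mul_sub, Matrix.sub_apply] at h2
      linarith
    have h3 := congrArg (fun M => M i j) (keyInd m)
    simp only [Matrix.add_apply] at h3
    have h4 : 0 ≤ (T ^ (m + 1) * Ai) i j := nonneg_mul (nnTpow (m + 1)) hAi i j
    have h5 : 0 ≤ C i j := nnC i j
    linarith
  -- spectral part
  have hET : A * Ai * T = T := by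
    rw [hT, hD, hG2, hB3]
    simp only [← mul_assoc]
    rw [hEXi]
  have main : ∀ μ ∈ spectrum ℂ (T.map (algebraMap ℝ ℂ)), ‖μ‖ < 1 := by
    intro μ hμ
    by_contra hcon
    push_neg at hcon
    have hμ0 : μ ≠ 0 := by
      intro h
      rw [h, norm_zero] at hcon
      linarith
    rw [spectrum.mem_iff] at hμ
    have hdet : (algebraMap ℂ (Matrix (Fin n) (Fin n) ℂ) μ - T.map (algebraMap ℝ ℂ)).det = 0 := by
      by_contra hd
      exact hμ ((Matrix.isUnit_iff_isUnit_det _).mpr (Ne.isUnit hd))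
    obtain ⟨x, hx0, hxe⟩ := Matrix.exists_mulVec_eq_zero_iff.mpr hdet
    have hx : T.map (algebraMap ℝ ℂ) *ᵥ x = μ • x := by
      rw [Matrix.sub_mulVec] at hxe
      have h2 : algebraMap ℂ (Matrix (Fin n) (Fin n) ℂ) μ *ᵥ x = μ • x := by
        rw [Algebra.algebraMap_eq_smul_one, Matrix.smul_mulVec, Matrix.one_mulVec]
      rw [h2] at hxe
      exact (sub_eq_zero.mp hxe).symm
    have hmap : ∀ k : ℕ, (T ^ k).map (algebraMap ℝ ℂ) = T.map (algebraMap ℝ ℂ) ^ k := by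
      intro k
      simpa [RingHom.mapMatrix_apply] using map_pow (algebraMap ℝ ℂ).mapMatrix T k
    have hpow : ∀ k : ℕ, (T ^ k).map (algebraMap ℝ ℂ) *ᵥ x = μ ^ k • x := by
      intro k
      rw [hmap k]
      induction k with
      | zero => simp [Matrix.one_mulVec]
      | succ k ih =>
        rw [pow_succ, ← Matrix.mulVec_mulVec, hx, Matrix.mulVec_smul, ih, smul_smul, ← pow_succ']
    set u : Fin n → ℝ := fun j => ‖(X.map (algebraMap ℝ ℂ) *ᵥ x) j‖ with hu
    set v : Fin n → ℝ := fun j => ‖x j‖ with hv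
    have hu0 : ∀ j, 0 ≤ u j := by
      intro j
      simp only [hu]
      exact norm_nonneg _
    have hEx : (A * Ai).map (algebraMap ℝ ℂ) *ᵥ x = x := by
      have h1 : (A * Ai).map (algebraMap ℝ ℂ) * T.map (algebraMap ℝ ℂ)
          = T.map (algebraMap ℝ ℂ) := by
        rw [← Matrix.map_mul, hET]
      have h2 : (A * Ai).map (algebraMap ℝ ℂ) *ᵥ (μ • x) = μ • x := by
        rw [← hx, Matrix.mulVec_mulVec, h1]
      rw [Matrix.mulVec_smul] at h2
      exact smul_right_injective _ hμ0 h2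
    have hxXi : x = Xi.map (algebraMap ℝ ℂ) *ᵥ (X.map (algebraMap ℝ ℂ) *ᵥ x) := by
      rw [Matrix.mulVec_mulVec, ← Matrix.map_mul, hXiX, hEx]
    have hvu : ∀ i, v i ≤ (Xi *ᵥ u) i := by
      intro i
      have h2 := abs_mulVec_le hXi (X.map (algebraMap ℝ ℂ) *ᵥ x) i
      rw [← hxXi] at h2
      simpa [hv, hu] using h2
    have hclaim1 : ∀ (k : ℕ) (i : Fin n), ‖μ‖ ^ k * v i ≤ ((T ^ k) *ᵥ v) i := by
      intro k i
      have h1 := abs_mulVec_le (nnTpow k) x i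
      rw [hpow k] at h1
      simp only [Pi.smul_apply, smul_eq_mul, norm_mul, norm_pow] at h1
      simpa [hv] using h1
    have hclaim2 : ∀ (k : ℕ) (i : Fin n),
        ((T ^ (k + 1)) *ᵥ v) i ≤ ((T ^ (k + 1) * Xi) *ᵥ u) i := by
      intro k i
      have h1 := mulVec_mono (nnTpow (k + 1)) hvu i
      rwa [Matrix.mulVec_mulVec] at h1
    have hsum3 : ∀ (m : ℕ) (i : Fin n),
        ∑ k ∈ Finset.range m, ((T ^ (k + 1) * Xi) *ᵥ u) i
          = (((∑ k ∈ Finset.range m, T ^ (k + 1)) * Xi) *ᵥ u) i := by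
      intro m i
      rw [Finset.sum_mul]
      simp only [Matrix.mulVec, dotProduct, Matrix.sum_apply, Finset.sum_mul]
      rw [Finset.sum_comm]
    have hstep4 : ∀ (m : ℕ) (i : Fin n),
        (((∑ k ∈ Finset.range m, T ^ (k + 1)) * Xi) *ᵥ u) i ≤ (Ai *ᵥ u) i := by
      intro m i
      exact mulVec_entry_mono (keyBound m) hu0 i
    obtain ⟨i0, hi0⟩ := Function.ne_iff.mp hx0
    have hvpos : 0 < v i0 := by
      simp only [hv]
      exact norm_pos_iff.mpr (by simpa using hi0)
    obtain ⟨m, hm⟩ := exists_nat_gt ((Ai *ᵥ u) i0 / v i0)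
    have hfin : (m : ℝ) * v i0 ≤ (Ai *ᵥ u) i0 := by
      have h1 : (m : ℝ) * v i0 ≤ ∑ k ∈ Finset.range m, ‖μ‖ ^ (k + 1) * v i0 := by
        have h2 : ∀ k ∈ Finset.range m, v i0 ≤ ‖μ‖ ^ (k + 1) * v i0 := fun k _ =>
          le_mul_of_one_le_left (le_of_lt hvpos) (one_le_pow₀ hcon)
        calc (m : ℝ) * v i0 = ∑ _k ∈ Finset.range m, v i0 := by
              rw [Finset.sum_const, Finset.card_range, nsmul_eq_mul]
          _ ≤ _ := Finset.sum_le_sum h2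
      have h3 : ∑ k ∈ Finset.range m, ‖μ‖ ^ (k + 1) * v i0
          ≤ ∑ k ∈ Finset.range m, ((T ^ (k + 1) * Xi) *ᵥ u) i0 :=
        Finset.sum_le_sum fun k _ => le_trans (hclaim1 (k + 1) i0) (hclaim2 k i0)
      calc (m : ℝ) * v i0
          ≤ ∑ k ∈ Finset.range m, ‖μ‖ ^ (k + 1) * v i0 := h1
        _ ≤ ∑ k ∈ Finset.range m, ((T ^ (k + 1) * Xi) *ᵥ u) i0 := h3
        _ = (((∑ k ∈ Finset.range m, T ^ (k + 1)) * Xi) *ᵥ u) i0 := hsum3 m i0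
        _ ≤ (Ai *ᵥ u) i0 := hstep4 m i0
    have hlt := (div_lt_iff₀ hvpos).mp hm
    linarith
  show sSup ((fun z : ℂ => ‖z‖) '' spectrum ℂ (T.map (algebraMap ℝ ℂ))) < 1
  by_cases hne : ((fun z : ℂ => ‖z‖) '' spectrum ℂ (T.map (algebraMap ℝ ℂ))).Nonempty
  · have hfin2 : ((fun z : ℂ => ‖z‖) '' spectrum ℂ (T.map (algebraMap ℝ ℂ))).Finite :=
      Set.Finite.image _ (Matrix.finite_spectrum _)
    obtain ⟨μ, hμ, hEq⟩ := hne.csSup_mem hfin2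
    rw [← hEq]
    exact main μ hμ
  · rw [Set.not_nonempty_iff_eq_empty] at hne
    rw [hne, Real.sSup_empty]
    exact one_pos
end

section
/- If A = K − L = U − V = X − Y are three weak regular splittings of a nonsingular monotone matrix A (A⁻¹ ≥ 0), then ρ(X⁻¹YU⁻¹VK⁻¹L) < 1. -/
open Matrix

/-!
Put `T = X⁻¹Y·U⁻¹V·K⁻¹L ≥ 0` and `P = X⁻¹ + X⁻¹YU⁻¹ + X⁻¹YU⁻¹VK⁻¹ ≥ X⁻¹ ≥ 0`; then `PA = 1 - T`.
Hence `(∑_{k<m} T^k) P = (1 - T^m) A⁻¹ ≤ A⁻¹`, so the nonnegative series `∑ T^k X⁻¹` converges,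
`T^k X⁻¹ → 0` and therefore `T^k → 0`. Evaluating `T^k` on an eigenvector for an eigenvalue `z`
gives `z^k → 0`, i.e. `‖z‖ < 1`.
-/

open Filter Topology Finset

section

variable {n : ℕ}

theorem nonneg_add {M N : Matrix (Fin n) (Fin n) ℝ} (hM : Nonneg M) (hN : Nonneg N) :
    Nonneg (M + N) := fun i j => add_nonneg (hM i j) (hN i j)

theorem nonneg_mul_s16 {M N : Matrix (Fin n) (Fin n) ℝ} (hM : Nonneg M) (hN : Nonneg N) :
    Nonneg (M * N) := fun i j => by
  rw [Matrix.mul_apply]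
  exact Finset.sum_nonneg fun k _ => mul_nonneg (hM i k) (hN k j)

theorem nonneg_pow {M : Matrix (Fin n) (Fin n) ℝ} (hM : Nonneg M) (k : ℕ) :
    Nonneg (M ^ k) := by
  induction k with
  | zero => intro i j; rw [pow_zero, one_apply]; positivity
  | succ k ih => rw [pow_succ]; exact nonneg_mul_s16 ih hM

theorem nonneg_sum {ι : Type*} {s : Finset ι} {f : ι → Matrix (Fin n) (Fin n) ℝ}
    (hf : ∀ k ∈ s, Nonneg (f k)) : Nonneg (∑ k ∈ s, f k) := fun i j => by
  rw [Matrix.sum_apply]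
  exact Finset.sum_nonneg fun k hk => hf k hk i j

theorem tendsto_zero_of_nonneg_of_sum_range_le {f : ℕ → Matrix (Fin n) (Fin n) ℝ}
    {B : Matrix (Fin n) (Fin n) ℝ} (hf : ∀ k, Nonneg (f k))
    (hB : ∀ m, Nonneg (B - ∑ k ∈ range m, f k)) : Tendsto f atTop (𝓝 0) := by
  refine tendsto_pi_nhds.mpr fun i => tendsto_pi_nhds.mpr fun j => ?_
  refine (summable_of_sum_range_le (c := B i j) (fun k => hf k i j) fun m => ?_).tendsto_atTop_zero
  have := hB m i j
  rw [Matrix.sub_apply, Matrix.sum_apply] at this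
  linarith

theorem inv_mul_eq_one_sub {ι R : Type*} [Fintype ι] [DecidableEq ι] [CommRing R]
    {A K L : Matrix ι ι R} (hA : A = K - L) (hK : IsUnit K) : K⁻¹ * A = 1 - K⁻¹ * L := by
  rw [hA, Matrix.mul_sub, nonsing_inv_mul K ((isUnit_iff_isUnit_det K).mp hK)]

theorem tendsto_pow_of_mul_eq_one_sub {T P Q A : Matrix (Fin n) (Fin n) ℝ}
    (hT : Nonneg T) (hQ : Nonneg Q) (hPQ : Nonneg (P - Q)) (hQunit : IsUnit Q)
    (hAunit : IsUnit A) (hA : Nonneg A⁻¹) (hPA : P * A = 1 - T) :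
    Tendsto (T ^ ·) atTop (𝓝 0) := by
  have hgeom : ∀ m, (∑ k ∈ range m, T ^ k) * P = A⁻¹ - T ^ m * A⁻¹ := fun m => by
    calc (∑ k ∈ range m, T ^ k) * P
        = (∑ k ∈ range m, T ^ k) * (P * A) * A⁻¹ := by
          rw [mul_assoc, mul_assoc P,
            mul_nonsing_inv A ((isUnit_iff_isUnit_det A).mp hAunit), mul_one]
      _ = A⁻¹ - T ^ m * A⁻¹ := by rw [hPA, geom_sum_mul_neg, Matrix.sub_mul, one_mul]
  have hbound : ∀ m, Nonneg (A⁻¹ - ∑ k ∈ range m, T ^ k * Q) := fun m => by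
    have : A⁻¹ - ∑ k ∈ range m, T ^ k * Q = T ^ m * A⁻¹ + ∑ k ∈ range m, T ^ k * (P - Q) := by
      simp only [Matrix.mul_sub, Finset.sum_sub_distrib, ← Finset.sum_mul, hgeom]
      abel
    rw [this]
    exact nonneg_add (nonneg_mul_s16 (nonneg_pow hT m) hA)
      (nonneg_sum fun k _ => nonneg_mul_s16 (nonneg_pow hT k) hPQ)
  have hTQ : Tendsto (fun k => T ^ k * Q) atTop (𝓝 0) :=
    tendsto_zero_of_nonneg_of_sum_range_le (fun k => nonneg_mul_s16 (nonneg_pow hT k) hQ) hbound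
  have := hTQ.mul_const Q⁻¹
  simpa only [zero_mul, mul_assoc,
    mul_nonsing_inv Q ((isUnit_iff_isUnit_det Q).mp hQunit), mul_one] using this

theorem Matrix.norm_lt_one_of_mem_spectrum_of_tendsto_pow {ι 𝕜 : Type*} [Fintype ι]
    [DecidableEq ι] [NormedField 𝕜] {B : Matrix ι ι 𝕜}
    (hB : Tendsto (B ^ ·) atTop (𝓝 0)) {z : 𝕜} (hz : z ∈ spectrum 𝕜 B) : ‖z‖ < 1 := by
  rw [← Matrix.spectrum_toLin', ← Module.End.hasEigenvalue_iff_mem_spectrum] at hz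
  obtain ⟨v, hv⟩ := hz.exists_hasEigenvector
  obtain ⟨i, hi⟩ : ∃ i, v i ≠ 0 := Function.ne_iff.mp hv.2
  have hpow : ∀ j : ℕ, (B ^ j *ᵥ v) i = z ^ j * v i := fun j => by
    simpa [← Matrix.toLin'_pow] using congrFun (hv.pow_apply j) i
  have hlim : Tendsto (fun j : ℕ => (B ^ j *ᵥ v) i) atTop (𝓝 0) := by
    have hcont : Continuous fun M : Matrix ι ι 𝕜 => (M *ᵥ v) i :=
      (continuous_apply i).comp (continuous_id.matrix_mulVec continuous_const)
    have := (hcont.tendsto 0).comp hB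
    rwa [zero_mulVec, Pi.zero_apply] at this
  rw [← tendsto_pow_atTop_nhds_zero_iff_norm_lt_one]
  simpa [hpow, hi] using hlim.div_const (v i)

theorem specRad_lt_one_of_tendsto_pow {T : Matrix (Fin n) (Fin n) ℝ}
    (hT : Tendsto (T ^ ·) atTop (𝓝 0)) : specRad T < 1 := by
  set B := T.map (algebraMap ℝ ℂ)
  have hB : Tendsto (B ^ ·) atTop (𝓝 0) := by
    have := ((continuous_id.matrix_map Complex.continuous_ofReal).tendsto 0).comp hT
    simp only [Function.comp_def, id, Matrix.map_zero _ Complex.ofReal_zero] at this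
    convert this using 2 with j
    exact (map_pow (algebraMap ℝ ℂ).mapMatrix T j).symm
  have hfin : (spectrum ℂ B).Finite := B.finite_spectrum
  rcases ((spectrum ℂ B).image fun z : ℂ => ‖z‖).eq_empty_or_nonempty with h | h
  · rw [specRad, h, Real.sSup_empty]
    exact one_pos
  · rw [specRad, Set.Finite.csSup_lt_iff (hfin.image _) h]
    rintro _ ⟨z, hz, rfl⟩
    exact B.norm_lt_one_of_mem_spectrum_of_tendsto_pow hB hz

end

theorem three_step_convergence_nonsingular {n : ℕ}
    (A K L U V X Y : Matrix (Fin n) (Fin n) ℝ)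
    (hAunit : IsUnit A) (hAi : Nonneg A⁻¹)
    (hsK : A = K - L) (hKunit : IsUnit K)
    (hKi : Nonneg K⁻¹) (hKL : Nonneg (K⁻¹ * L))
    (hsU : A = U - V) (hUunit : IsUnit U)
    (hUi : Nonneg U⁻¹) (hUV : Nonneg (U⁻¹ * V))
    (hsX : A = X - Y) (hXunit : IsUnit X)
    (hXi : Nonneg X⁻¹) (hXY : Nonneg (X⁻¹ * Y)) :
    specRad (X⁻¹ * Y * U⁻¹ * V * K⁻¹ * L) < 1 := by
  set T := X⁻¹ * Y * U⁻¹ * V * K⁻¹ * L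
  set P := X⁻¹ + X⁻¹ * Y * U⁻¹ + X⁻¹ * Y * U⁻¹ * V * K⁻¹
  have hT : T = X⁻¹ * Y * (U⁻¹ * V) * (K⁻¹ * L) := by simp only [T, mul_assoc]
  have hTnonneg : Nonneg T := hT ▸ nonneg_mul_s16 (nonneg_mul_s16 hXY hUV) hKL
  have hPX : Nonneg (P - X⁻¹) := by
    rw [show P - X⁻¹ = X⁻¹ * Y * U⁻¹ + X⁻¹ * Y * (U⁻¹ * V) * K⁻¹ by simp only [P, mul_assoc]; abel]
    exact nonneg_add (nonneg_mul_s16 hXY hUi) (nonneg_mul_s16 (nonneg_mul_s16 hXY hUV) hKi)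
  -- Composing the three iterations telescopes: `(1 - a) + a (1 - b) + a b (1 - c) = 1 - a b c`.
  have hPA : P * A = 1 - T := by
    calc P * A = X⁻¹ * A + X⁻¹ * Y * (U⁻¹ * A) + X⁻¹ * Y * (U⁻¹ * V) * (K⁻¹ * A) := by
          simp only [P, add_mul, mul_assoc]
      _ = 1 - T := by
          rw [inv_mul_eq_one_sub hsX hXunit, inv_mul_eq_one_sub hsU hUunit,
            inv_mul_eq_one_sub hsK hKunit, hT]
          noncomm_ring
  exact specRad_lt_one_of_tendsto_pow <| tendsto_pow_of_mul_eq_one_sub hTnonneg hXi hPX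
    (isUnit_nonsing_inv_iff.mpr hXunit) hAunit hAi hPA
end

section
/- Let A = K − L = U − V = X − Y be three weak regular splittings of a nonsingular monotone matrix A (A⁻¹ ≥ 0), and let H = X⁻¹YU⁻¹VK⁻¹L. Then I − H is invertible, B := A(I − H)⁻¹ = K(K + X − A + YU⁻¹L)⁻¹X, and A = B − C with B⁻¹ ≥ 0 and B⁻¹C = H ≥ 0 is the unique weak regular splitting of A whose iteration matrix is H. -/
open Matrix

lemma nn_mul {n : ℕ} {M N : Matrix (Fin n) (Fin n) ℝ} (hM : Nonneg M) (hN : Nonneg N) :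
    Nonneg (M * N) := by
  intro i j
  rw [Matrix.mul_apply]
  exact Finset.sum_nonneg fun k _ => mul_nonneg (hM i k) (hN k j)

lemma nn_mulVec_mono {n : ℕ} {M : Matrix (Fin n) (Fin n) ℝ} (hM : Nonneg M) {u v : Fin n → ℝ}
    (h : ∀ i, u i ≤ v i) : ∀ i, (M *ᵥ u) i ≤ (M *ᵥ v) i := by
  intro i
  simp only [Matrix.mulVec, dotProduct]
  exact Finset.sum_le_sum fun j _ => mul_le_mul_of_nonneg_left (h j) (hM i j)

lemma nn_mulVec_nonneg {n : ℕ} {M : Matrix (Fin n) (Fin n) ℝ} (hM : Nonneg M) {u : Fin n → ℝ}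
    (hu : ∀ i, 0 ≤ u i) : ∀ i, 0 ≤ (M *ᵥ u) i := by
  intro i
  simp only [Matrix.mulVec, dotProduct]
  exact Finset.sum_nonneg fun j _ => mul_nonneg (hM i j) (hu j)

/-- A nonnegative invertible matrix has strictly positive row sums. -/
lemma nn_rowsum_pos {n : ℕ} {M : Matrix (Fin n) (Fin n) ℝ} (hM : Nonneg M) (hu : IsUnit M) :
    ∀ i, 0 < (M *ᵥ fun _ => (1:ℝ)) i := by
  intro i
  rcases lt_or_eq_of_le (nn_mulVec_nonneg hM (fun _ => zero_le_one) i) with h | h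
  · exact h
  exfalso
  have hrow : ∀ j, M i j = 0 := by
    have h0 : ∑ j, M i j * 1 = 0 := h.symm
    intro j
    have := (Finset.sum_eq_zero_iff_of_nonneg
      (fun k _ => mul_nonneg (hM i k) zero_le_one)).mp h0 j (Finset.mem_univ j)
    simpa using this
  have : M.det = 0 := Matrix.det_eq_zero_of_row_eq_zero i hrow
  rw [Matrix.isUnit_iff_isUnit_det, this] at hu
  exact (by simpa using hu)

set_option maxHeartbeats 1000000 in
theorem unique_induced_splitting_nonsingular {n : ℕ}
    (A K L U V X Y : Matrix (Fin n) (Fin n) ℝ)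
    (hAunit : IsUnit A) (hAi : Nonneg A⁻¹)
    (hsK : A = K - L) (hKunit : IsUnit K)
    (hKi : Nonneg K⁻¹) (hKL : Nonneg (K⁻¹ * L))
    (hsU : A = U - V) (hUunit : IsUnit U)
    (hUi : Nonneg U⁻¹) (hUV : Nonneg (U⁻¹ * V))
    (hsX : A = X - Y) (hXunit : IsUnit X)
    (hXi : Nonneg X⁻¹) (hXY : Nonneg (X⁻¹ * Y)) :
    IsUnit (1 - X⁻¹ * Y * U⁻¹ * V * K⁻¹ * L) ∧
    A * (1 - X⁻¹ * Y * U⁻¹ * V * K⁻¹ * L)⁻¹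
      = K * (K + X - A + Y * U⁻¹ * L)⁻¹ * X ∧
    (IsUnit (A * (1 - X⁻¹ * Y * U⁻¹ * V * K⁻¹ * L)⁻¹) ∧
     Nonneg (A * (1 - X⁻¹ * Y * U⁻¹ * V * K⁻¹ * L)⁻¹)⁻¹ ∧
     (A * (1 - X⁻¹ * Y * U⁻¹ * V * K⁻¹ * L)⁻¹)⁻¹ *
       (A * (1 - X⁻¹ * Y * U⁻¹ * V * K⁻¹ * L)⁻¹ - A)
       = X⁻¹ * Y * U⁻¹ * V * K⁻¹ * L ∧
     Nonneg (X⁻¹ * Y * U⁻¹ * V * K⁻¹ * L)) ∧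
    (∀ B' : Matrix (Fin n) (Fin n) ℝ, IsUnit B' → Nonneg B'⁻¹ →
      Nonneg (B'⁻¹ * (B' - A)) →
      B'⁻¹ * (B' - A) = X⁻¹ * Y * U⁻¹ * V * K⁻¹ * L →
      B' = A * (1 - X⁻¹ * Y * U⁻¹ * V * K⁻¹ * L)⁻¹) := by
  have hAdet := (Matrix.isUnit_iff_isUnit_det A).mp hAunit
  have hKdet := (Matrix.isUnit_iff_isUnit_det K).mp hKunit
  have hUdet := (Matrix.isUnit_iff_isUnit_det U).mp hUunit
  have hXdet := (Matrix.isUnit_iff_isUnit_det X).mp hXunit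
  have hAA : A * A⁻¹ = 1 := Matrix.mul_nonsing_inv A hAdet
  have hAiA : A⁻¹ * A = 1 := Matrix.nonsing_inv_mul A hAdet
  have hKK : K * K⁻¹ = 1 := Matrix.mul_nonsing_inv K hKdet
  have hKiK : K⁻¹ * K = 1 := Matrix.nonsing_inv_mul K hKdet
  have hUiU : U⁻¹ * U = 1 := Matrix.nonsing_inv_mul U hUdet
  have hXX : X * X⁻¹ = 1 := Matrix.mul_nonsing_inv X hXdet
  have hXiX : X⁻¹ * X = 1 := Matrix.nonsing_inv_mul X hXdet
  set Hm := X⁻¹ * Y * U⁻¹ * V * K⁻¹ * L with hHm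
  set W := X⁻¹ + X⁻¹ * Y * U⁻¹ + X⁻¹ * Y * U⁻¹ * V * K⁻¹ with hWdef
  -- Nonnegativity of Hm and W
  have hHnn : Nonneg Hm := by
    have : Hm = (X⁻¹ * Y) * ((U⁻¹ * V) * (K⁻¹ * L)) := by rw [hHm]; noncomm_ring
    rw [this]; exact nn_mul hXY (nn_mul hUV hKL)
  have hWnn : Nonneg W := by
    have h2 : Nonneg (X⁻¹ * Y * U⁻¹) := nn_mul hXY hUi
    have h3 : Nonneg (X⁻¹ * Y * U⁻¹ * V * K⁻¹) := by
      have : X⁻¹ * Y * U⁻¹ * V * K⁻¹ = (X⁻¹ * Y) * ((U⁻¹ * V) * K⁻¹) := by noncomm_ring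
      rw [this]; exact nn_mul hXY (nn_mul hUV hKi)
    intro i j
    exact add_nonneg (add_nonneg (hXi i j) (h2 i j)) (h3 i j)
  -- The key telescoping identity W * A = 1 - Hm
  have h1 : X⁻¹ * A = 1 - X⁻¹ * Y := by rw [hsX, mul_sub, hXiX]
  have h2 : U⁻¹ * A = 1 - U⁻¹ * V := by rw [hsU, mul_sub, hUiU]
  have h3 : K⁻¹ * A = 1 - K⁻¹ * L := by rw [hsK, mul_sub, hKiK]
  have hWA : W * A = 1 - Hm := by
    have e : W * A = X⁻¹ * A + (X⁻¹ * Y) * (U⁻¹ * A) + ((X⁻¹ * Y) * (U⁻¹ * V)) * (K⁻¹ * A) := by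
      rw [hWdef]; noncomm_ring
    rw [e, h1, h2, h3, hHm]; noncomm_ring
  -- 1 - Hm is invertible
  have hIH : IsUnit (1 - Hm) := by
    rw [Matrix.isUnit_iff_isUnit_det, isUnit_iff_ne_zero]
    intro hdet
    obtain ⟨v, hv0, hv⟩ := (Matrix.exists_mulVec_eq_zero_iff).mpr hdet
    have hfix : Hm *ᵥ v = v := by
      have h := hv
      rw [Matrix.sub_mulVec, Matrix.one_mulVec, sub_eq_zero] at h
      exact h.symm
    -- nonempty index type
    obtain ⟨i0, hi0⟩ : ∃ i, v i ≠ 0 := Function.ne_iff.mp hv0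
    haveI : Nonempty (Fin n) := ⟨i0⟩
    obtain ⟨a, hadef⟩ : ∃ a : Fin n → ℝ, a = fun i => |v i| := ⟨_, rfl⟩
    have haH : ∀ i, a i ≤ (Hm *ᵥ a) i := by
      intro i
      calc a i = |v i| := by rw [hadef]
        _ = |(Hm *ᵥ v) i| := by rw [hfix]
        _ = |∑ j, Hm i j * v j| := by simp [Matrix.mulVec, dotProduct]
        _ ≤ ∑ j, |Hm i j * v j| := Finset.abs_sum_le_sum_abs _ _
        _ = ∑ j, Hm i j * a j := by
            refine Finset.sum_congr rfl fun j _ => ?_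
            rw [abs_mul, abs_of_nonneg (hHnn i j), hadef]
        _ = (Hm *ᵥ a) i := by simp [Matrix.mulVec, dotProduct]
    have hHk : ∀ k : ℕ, Nonneg (Hm ^ k) := by
      intro k; induction k with
      | zero =>
        intro i j
        rw [pow_zero]
        by_cases h : i = j <;> simp [Matrix.one_apply, h]
      | succ k ih => rw [pow_succ]; exact nn_mul ih hHnn
    have hka : ∀ (k : ℕ) (i : Fin n), a i ≤ ((Hm ^ k) *ᵥ a) i := by
      intro k; induction k with
      | zero => intro i; simp [Matrix.one_mulVec]
      | succ k ih =>
        intro i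
        have step : ((Hm ^ k) *ᵥ a) i ≤ ((Hm ^ (k+1)) *ᵥ a) i := by
          have : (Hm ^ k) *ᵥ (Hm *ᵥ a) = (Hm ^ (k+1)) *ᵥ a := by
            rw [Matrix.mulVec_mulVec, ← pow_succ]
          rw [← this]
          exact nn_mulVec_mono (hHk k) haH i
        exact le_trans (ih i) step
    -- positive comparison vector
    obtain ⟨v0, hv0def⟩ : ∃ v0 : Fin n → ℝ, v0 = X⁻¹ *ᵥ (fun _ => (1:ℝ)) := ⟨_, rfl⟩
    have hv0pos : ∀ i, 0 < v0 i := by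
      rw [hv0def]; exact nn_rowsum_pos hXi (Matrix.isUnit_nonsing_inv_iff.mpr hXunit)
    obtain ⟨u, hudef⟩ : ∃ u : Fin n → ℝ, u = W *ᵥ (fun _ => (1:ℝ)) := ⟨_, rfl⟩
    have hv0u : ∀ i, v0 i ≤ u i := by
      intro i
      have : u i = v0 i + ((X⁻¹ * Y * U⁻¹ + X⁻¹ * Y * U⁻¹ * V * K⁻¹) *ᵥ (fun _ => (1:ℝ))) i := by
        rw [hudef, hv0def, hWdef, add_assoc, Matrix.add_mulVec]; rfl
      rw [this]
      have hrest : Nonneg (X⁻¹ * Y * U⁻¹ + X⁻¹ * Y * U⁻¹ * V * K⁻¹) := by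
        have h2 : Nonneg (X⁻¹ * Y * U⁻¹) := nn_mul hXY hUi
        have h3 : Nonneg (X⁻¹ * Y * U⁻¹ * V * K⁻¹) := by
          have : X⁻¹ * Y * U⁻¹ * V * K⁻¹ = (X⁻¹ * Y) * ((U⁻¹ * V) * K⁻¹) := by noncomm_ring
          rw [this]; exact nn_mul hXY (nn_mul hUV hKi)
        intro i j; exact add_nonneg (h2 i j) (h3 i j)
      have := nn_mulVec_nonneg hrest (fun _ => (zero_le_one : (0:ℝ) ≤ 1)) i
      linarith
    obtain ⟨t, htdef⟩ : ∃ t : ℝ, t = Finset.univ.sup' (Finset.univ_nonempty) (fun i => a i / v0 i) :=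
      ⟨_, rfl⟩
    have hta : ∀ i, a i ≤ t * v0 i := by
      intro i
      have h1 : a i / v0 i ≤ t := by
        rw [htdef]; exact Finset.le_sup' (fun i => a i / v0 i) (Finset.mem_univ i)
      calc a i = (a i / v0 i) * v0 i := (div_mul_cancel₀ (a i) (hv0pos i).ne').symm
        _ ≤ t * v0 i := mul_le_mul_of_nonneg_right h1 (hv0pos i).le
    have ht0 : 0 ≤ t := by
      have h1 : a i0 / v0 i0 ≤ t := by
        rw [htdef]; exact Finset.le_sup' (fun i => a i / v0 i) (Finset.mem_univ i0)
      have : 0 ≤ a i0 / v0 i0 :=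
        div_nonneg (by rw [hadef]; exact abs_nonneg _) (hv0pos i0).le
      linarith
    have htu : ∀ i, a i ≤ t * u i := fun i =>
      le_trans (hta i) (mul_le_mul_of_nonneg_left (hv0u i) ht0)
    obtain ⟨w, hwdef⟩ : ∃ w : Fin n → ℝ, w = A⁻¹ *ᵥ (fun _ => (1:ℝ)) := ⟨_, rfl⟩
    have hwnn : ∀ i, 0 ≤ w i := by
      rw [hwdef]; exact nn_mulVec_nonneg hAi (fun _ => zero_le_one)
    have hWform : W = A⁻¹ - Hm * A⁻¹ := by
      have : W = W * A * A⁻¹ := by rw [mul_assoc, hAA, mul_one]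
      rw [this, hWA, sub_mul, one_mul]
    -- telescoping sum, at vector level
    have hsum : ∀ m : ℕ, ∑ k ∈ Finset.range (m+1), ((Hm ^ k) *ᵥ u) = w - (Hm ^ (m+1)) *ᵥ w := by
      intro m; induction m with
      | zero =>
        simp only [zero_add, Finset.range_one, Finset.sum_singleton, pow_zero,
          Matrix.one_mulVec, pow_one]
        rw [hudef, hwdef, hWform, Matrix.sub_mulVec, ← Matrix.mulVec_mulVec]
      | succ m ih =>
        rw [Finset.sum_range_succ, ih]
        have : (Hm ^ (m+1)) *ᵥ u = (Hm ^ (m+1)) *ᵥ w - (Hm ^ (m+2)) *ᵥ w := by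
          have hu' : u = w - Hm *ᵥ w := by
            rw [hudef, hwdef, hWform, Matrix.sub_mulVec, ← Matrix.mulVec_mulVec]
          rw [hu', Matrix.mulVec_sub, Matrix.mulVec_mulVec, ← pow_succ]
        rw [this]; abel
    -- the key bound: (m+1) * a i ≤ t * w i for every m
    have hbound : ∀ (m : ℕ) (i : Fin n), ((m:ℝ)+1) * a i ≤ t * w i := by
      intro m i
      have hterm : ∀ k : ℕ, a i ≤ t * ((Hm ^ k) *ᵥ u) i := by
        intro k
        have h1 : a i ≤ ((Hm ^ k) *ᵥ a) i := hka k i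
        have h2 : ((Hm ^ k) *ᵥ a) i ≤ ((Hm ^ k) *ᵥ (t • u)) i :=
          nn_mulVec_mono (hHk k) htu i
        have h3 : ((Hm ^ k) *ᵥ (t • u)) = t • ((Hm ^ k) *ᵥ u) := Matrix.mulVec_smul _ _ _
        calc a i ≤ ((Hm ^ k) *ᵥ (t • u)) i := le_trans h1 h2
          _ = t * ((Hm ^ k) *ᵥ u) i := by rw [h3]; rfl
      have hsum' : ((m:ℝ)+1) * a i ≤ t * (∑ k ∈ Finset.range (m+1), ((Hm ^ k) *ᵥ u)) i := by
        have : (∑ k ∈ Finset.range (m+1), ((Hm ^ k) *ᵥ u)) i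
            = ∑ k ∈ Finset.range (m+1), ((Hm ^ k) *ᵥ u) i := by
          simp [Finset.sum_apply]
        rw [this, Finset.mul_sum]
        calc ((m:ℝ)+1) * a i = ∑ _k ∈ Finset.range (m+1), a i := by
              simp [Finset.sum_const, mul_comm]
          _ ≤ ∑ k ∈ Finset.range (m+1), t * ((Hm ^ k) *ᵥ u) i :=
              Finset.sum_le_sum fun k _ => hterm k
      rw [hsum m] at hsum'
      have hnn : 0 ≤ ((Hm ^ (m+1)) *ᵥ w) i := nn_mulVec_nonneg (hHk (m+1)) hwnn i
      have : (w - (Hm ^ (m+1)) *ᵥ w) i = w i - ((Hm ^ (m+1)) *ᵥ w) i := rfl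
      rw [this] at hsum'
      nlinarith
    -- contradiction via Archimedes
    have hai0 : 0 < a i0 := by rw [hadef]; exact abs_pos.mpr hi0
    obtain ⟨m, hm⟩ := exists_nat_gt (t * w i0 / a i0)
    have h1 : t * w i0 < (m : ℝ) * a i0 := (div_lt_iff₀ hai0).mp hm
    have h2 : ((m:ℝ)) * a i0 ≤ ((m:ℝ)+1) * a i0 := by nlinarith
    have := hbound m i0
    linarith
  -- B := A * (1 - Hm)⁻¹ ; show B⁻¹ = W
  have hIHdet := (Matrix.isUnit_iff_isUnit_det _).mp hIH
  have hIHinv : (1 - Hm) * (1 - Hm)⁻¹ = 1 := Matrix.mul_nonsing_inv _ hIHdet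
  have hBW : (A * (1 - Hm)⁻¹) * W = 1 := by
    have : (A * (1 - Hm)⁻¹) * W = A * ((1 - Hm)⁻¹ * (W * A)) * A⁻¹ := by
      rw [mul_assoc, mul_assoc, mul_assoc, mul_assoc]
      congr 1
      rw [← mul_assoc, ← mul_assoc, mul_assoc _ A A⁻¹, hAA, mul_one]
    rw [this, hWA, Matrix.nonsing_inv_mul _ hIHdet, mul_one, hAA]
  have hWB : W * (A * (1 - Hm)⁻¹) = 1 := by
    rw [← mul_assoc, hWA, hIHinv]
  have hBinv : (A * (1 - Hm)⁻¹)⁻¹ = W := Matrix.inv_eq_right_inv hBW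
  have hBunit : IsUnit (A * (1 - Hm)⁻¹) := (Matrix.isUnit_iff_isUnit_det _).mpr (Matrix.isUnit_det_of_right_inverse hBW)
  refine ⟨hIH, ?_, ⟨hBunit, ?_, ?_, hHnn⟩, ?_⟩
  · -- A (1-Hm)⁻¹ = K (K + X - A + Y U⁻¹ L)⁻¹ X
    have hKV : K + V = U + L := by
      have h : K - L = U - V := hsK.symm.trans hsU
      have := sub_eq_sub_iff_add_eq_add.mp h
      linear_combination (norm := abel) this
    have e2 : U⁻¹ * K + U⁻¹ * V = 1 + U⁻¹ * L := by
      rw [← mul_add, hKV, mul_add, hUiU]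
    have hY : Y = X - A := by rw [hsX]; abel
    have hXWK : X * W * K = K + X - A + Y * U⁻¹ * L := by
      have e : X * W * K = X * X⁻¹ * K + X * X⁻¹ * (Y * (U⁻¹ * K))
          + X * X⁻¹ * (Y * ((U⁻¹ * V) * (K⁻¹ * K))) := by
        rw [hWdef]; noncomm_ring
      rw [e, hXX, hKiK, mul_one]
      simp only [one_mul]
      rw [add_assoc, ← mul_add, e2, mul_add, mul_one, hY]
      noncomm_ring
    have hW' : W⁻¹ = A * (1 - Hm)⁻¹ := Matrix.inv_eq_left_inv hBW
    rw [← hXWK, Matrix.mul_inv_rev, Matrix.mul_inv_rev, ← hW']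
    calc W⁻¹ = (K * K⁻¹) * W⁻¹ * (X⁻¹ * X) := by rw [hKK, hXiX, one_mul, mul_one]
      _ = K * (K⁻¹ * (W⁻¹ * X⁻¹)) * X := by noncomm_ring
  · rw [hBinv]; exact hWnn
  · rw [hBinv, mul_sub, hWB, hWA]; noncomm_ring
  · intro B' hB' _ _ hiter
    have hB'det := (Matrix.isUnit_iff_isUnit_det B').mp hB'
    have h1 : B'⁻¹ * A = 1 - Hm := by
      have := hiter
      rw [mul_sub, Matrix.nonsing_inv_mul B' hB'det] at this
      have h2 : B'⁻¹ * A = 1 - (1 - B'⁻¹ * A) := by noncomm_ring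
      rw [h2, this]
    have h2 : A = B' * (1 - Hm) := by
      rw [← h1, ← mul_assoc, Matrix.mul_nonsing_inv B' hB'det, one_mul]
    rw [h2, mul_assoc, hIHinv, mul_one]
end
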